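/- Fix m ≥ 1 and let E = EuclideanSpace ℝ (Fin m). Let Ω ⊆ E be open and a cone: for all λ > 0 and x ∈ Ω, λ • x ∈ Ω. Let V : E → ℝ satisfy V (λ • x) = λ⁻² * V x for all λ > 0 and x ∈ Ω. Let u : E → ℝ be twice continuously differentiable on Ω (ContDiffOn ℝ 2 u Ω) and satisfy Δu x + V x * u x = 0 for all x ∈ Ω, with Δ the Laplacian (sum over the standard orthonormal basis of second directional derivatives). For t ∈ ℝ write w_t : y ↦ (Real.exp (t/2)) * u ((Real.exp (−t/2)) • y). Then for every x ∈ Ω and t₀ ∈ ℝ, the function t ↦ w_t(x) has derivative at t₀ equal to Δw_{t₀} x + V x * w_{t₀} x − (1/2) * ⟪x, gradient w_{t₀} x⟫ + (1/2) * w_{t₀} x. -/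

import Mathlib

open scoped InnerProductSpace

/-- The Laplacian of `f : EuclideanSpace ℝ (Fin m) → ℝ`, computed in the
standard orthonormal basis as the sum of the second directional derivatives. -/
noncomputable def laplacian {m : ℕ} (f : EuclideanSpace ℝ (Fin m) → ℝ)
    (x : EuclideanSpace ℝ (Fin m)) : ℝ :=
  ∑ i : Fin m,
    ⟪fderiv ℝ (gradient f) x (EuclideanSpace.single i (1 : ℝ)),
      EuclideanSpace.single i (1 : ℝ)⟫_ℝ

section Aux
variable {m : ℕ}


-- fderiv of the rescaled function
lemma fderiv_rescale (u : EuclideanSpace ℝ (Fin m) → ℝ) {A c : ℝ} (hc : c ≠ 0)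
    (hAc : A * c = 1) (y : EuclideanSpace ℝ (Fin m)) :
    fderiv ℝ (fun z => A * u (c • z)) y = fderiv ℝ u (c • y) := by
  by_cases h : DifferentiableAt ℝ u (c • y)
  · have h1 : HasFDerivAt (fun z : EuclideanSpace ℝ (Fin m) => c • z)
        (c • ContinuousLinearMap.id ℝ (EuclideanSpace ℝ (Fin m))) y :=
      (hasFDerivAt_id y).const_smul c
    have h2 := (h.hasFDerivAt.comp y h1).const_mul A
    simp only [Function.comp_def] at h2
    rw [h2.fderiv]
    ext v
    simp [ContinuousLinearMap.smul_apply, map_smul, smul_eq_mul]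
    rw [← mul_assoc, hAc, one_mul]
  · have h' : ¬ DifferentiableAt ℝ (fun z => A * u (c • z)) y := by
      intro hd
      apply h
      have hd2 : DifferentiableAt ℝ
          (fun z : EuclideanSpace ℝ (Fin m) => c * (A * u (c • c⁻¹ • z))) (c • y) := by
        have hinner : DifferentiableAt ℝ
            (fun z : EuclideanSpace ℝ (Fin m) => c⁻¹ • z) (c • y) :=
          differentiableAt_id.const_smul c⁻¹
        have : DifferentiableAt ℝ
            ((fun z => A * u (c • z)) ∘ (fun z : EuclideanSpace ℝ (Fin m) => c⁻¹ • z))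
            (c • y) := by
          apply DifferentiableAt.comp _ _ hinner
          simpa [smul_smul, inv_mul_cancel₀ hc] using hd
        exact this.const_mul c
      have heq : (fun z : EuclideanSpace ℝ (Fin m) => c * (A * u (c • c⁻¹ • z))) = u := by
        funext z
        rw [smul_smul, mul_inv_cancel₀ hc, one_smul, ← mul_assoc, mul_comm c A, hAc, one_mul]
      rwa [heq] at hd2
    rw [fderiv_zero_of_not_differentiableAt h, fderiv_zero_of_not_differentiableAt h']

lemma gradient_rescale (u : EuclideanSpace ℝ (Fin m) → ℝ) {A c : ℝ} (hc : c ≠ 0)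
    (hAc : A * c = 1) :
    gradient (fun z => A * u (c • z)) = fun y => gradient u (c • y) := by
  funext y
  unfold gradient
  rw [fderiv_rescale u hc hAc]

lemma laplacian_rescale (u : EuclideanSpace ℝ (Fin m) → ℝ) {A c : ℝ} (hc : c ≠ 0)
    (hAc : A * c = 1) (x : EuclideanSpace ℝ (Fin m))
    (hg : DifferentiableAt ℝ (gradient u) (c • x)) :
    laplacian (fun z => A * u (c • z)) x = c * laplacian u (c • x) := by
  unfold laplacian
  rw [gradient_rescale u hc hAc]
  have key : fderiv ℝ (fun y => gradient u (c • y)) x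
      = (fderiv ℝ (gradient u) (c • x)).comp
        (c • ContinuousLinearMap.id ℝ (EuclideanSpace ℝ (Fin m))) := by
    have h2 := hg.hasFDerivAt.comp x ((hasFDerivAt_id x).const_smul c)
    simp only [Function.comp_def] at h2
    exact h2.fderiv
  rw [key, Finset.mul_sum]
  congr 1
  funext i
  simp [ContinuousLinearMap.comp_apply, ContinuousLinearMap.smul_apply, map_smul,
    real_inner_smul_left]


end Aux

/-- If `Ω` is an open cone, `V` is homogeneous of degree `-2` on `Ω`, and `u` is
a `C²` solution of `Δu + V u = 0` on `Ω`, then the rescaling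
`w_t(y) = e^{t/2} u(e^{-t/2} y)` satisfies the heat-type equation
`∂_t w = Δw + V w − ½ ⟪x, ∇w⟫ + ½ w`. -/
theorem stmt_6 (m : ℕ) (hm : 1 ≤ m) (Ω : Set (EuclideanSpace ℝ (Fin m)))
    (hΩopen : IsOpen Ω) (hΩcone : ∀ ⦃l : ℝ⦄, 0 < l → ∀ x ∈ Ω, l • x ∈ Ω)
    (V : EuclideanSpace ℝ (Fin m) → ℝ)
    (hV : ∀ ⦃l : ℝ⦄, 0 < l → ∀ x ∈ Ω, V (l • x) = l⁻¹ ^ 2 * V x)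
    (u : EuclideanSpace ℝ (Fin m) → ℝ) (hu : ContDiffOn ℝ 2 u Ω)
    (hjac : ∀ x ∈ Ω, laplacian u x + V x * u x = 0) :
    ∀ x ∈ Ω, ∀ t₀ : ℝ,
      HasDerivAt (fun t : ℝ => Real.exp (t / 2) * u (Real.exp (-t / 2) • x))
        (laplacian (fun y => Real.exp (t₀ / 2) * u (Real.exp (-t₀ / 2) • y)) x
          + V x * (Real.exp (t₀ / 2) * u (Real.exp (-t₀ / 2) • x))
          - (1 / 2) * ⟪x, gradient
              (fun y => Real.exp (t₀ / 2) * u (Real.exp (-t₀ / 2) • y)) x⟫_ℝ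
          + (1 / 2) * (Real.exp (t₀ / 2) * u (Real.exp (-t₀ / 2) • x))) t₀ := by
  intro x hx t₀
  set A : ℝ := Real.exp (t₀ / 2) with hA
  set c : ℝ := Real.exp (-t₀ / 2) with hcdef
  have hcpos : 0 < c := Real.exp_pos _
  have hAc : A * c = 1 := by
    rw [hA, hcdef, ← Real.exp_add]
    rw [show t₀ / 2 + -t₀ / 2 = 0 by ring, Real.exp_zero]
  set y₀ : EuclideanSpace ℝ (Fin m) := c • x with hy₀def
  have hy₀ : y₀ ∈ Ω := hΩcone hcpos x hx
  have hca : ContDiffAt ℝ 2 u y₀ := hu.contDiffAt (hΩopen.mem_nhds hy₀)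
  have hu1 : DifferentiableAt ℝ u y₀ := hca.differentiableAt (by norm_num)
  have hfd : DifferentiableAt ℝ (fderiv ℝ u) y₀ :=
    (hca.fderiv_right (m := 1) (by norm_num)).differentiableAt one_ne_zero
  have hg : DifferentiableAt ℝ (gradient u) y₀ := by
    have hT : Differentiable ℝ
        (InnerProductSpace.toDual ℝ (EuclideanSpace ℝ (Fin m))).symm :=
      (InnerProductSpace.toDual ℝ (EuclideanSpace ℝ (Fin m))).symm.toContinuousLinearEquiv.differentiable
    exact (hT _).comp y₀ hfd
  -- derivative computation
  have hA' : HasDerivAt (fun t : ℝ => Real.exp (t / 2)) (A * (1 / 2)) t₀ := by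
    refine ((Real.hasDerivAt_exp (t₀ / 2)).comp t₀ ((hasDerivAt_id t₀).div_const 2)).congr_deriv ?_
    simp only [hA, id]
  have hc1 : HasDerivAt (fun t : ℝ => Real.exp (-t / 2)) (c * (-1 / 2)) t₀ := by
    refine ((Real.hasDerivAt_exp (-t₀ / 2)).comp t₀
      (((hasDerivAt_id t₀).neg).div_const 2)).congr_deriv ?_
    simp only [hcdef, id]
  have hc' : HasDerivAt (fun t : ℝ => Real.exp (-t / 2) • x) ((c * (-1 / 2)) • x) t₀ :=
    hc1.smul_const x
  have hcomp : HasDerivAt (fun t : ℝ => u (Real.exp (-t / 2) • x))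
      (fderiv ℝ u y₀ ((c * (-1 / 2)) • x)) t₀ :=
    hu1.hasFDerivAt.comp_hasDerivAt t₀ hc'
  have hmain : HasDerivAt (fun t : ℝ => Real.exp (t / 2) * u (Real.exp (-t / 2) • x))
      (A * (1 / 2) * u (Real.exp (-t₀ / 2) • x)
        + Real.exp (t₀ / 2) * fderiv ℝ u y₀ ((c * (-1 / 2)) • x)) t₀ := hA'.mul hcomp
  convert hmain using 1
  -- now the value equality
  rw [laplacian_rescale u hcpos.ne' hAc x hg, gradient_rescale u hcpos.ne' hAc]
  have hVx : V x = c ^ 2 * V y₀ := by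
    have hx' : x = A • y₀ := by
      rw [hy₀def, smul_smul, hAc, one_smul]
    have hAinv : A⁻¹ = c := by
      rw [hA, hcdef, ← Real.exp_neg, neg_div]
    rw [hx', hV (Real.exp_pos _) y₀ hy₀, hAinv]
  have hip : ⟪x, gradient u y₀⟫_ℝ = fderiv ℝ u y₀ x := by
    rw [real_inner_comm]
    exact InnerProductSpace.toDual_symm_apply
  have hms : fderiv ℝ u y₀ ((c * (-1 / 2)) • x) = (c * (-1 / 2)) * fderiv ℝ u y₀ x := by
    rw [map_smul, smul_eq_mul]
  have hj := hjac y₀ hy₀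
  rw [hVx, hip, hms]
  simp only [← hcdef, ← hA, ← hy₀def]
  linear_combination c * hj + (c * V y₀ * u y₀ + (1 / 2) * (fderiv ℝ u y₀) x) * hAc
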